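/- arXiv:1111.1092 — 3 statements merged into one kernel-verified Lean document; each statement's English description precedes it below -/
import Mathlib

section
/- If U_{i-1}, U_i, U_{i+1}, U_{i+2} are nonnegative reals and we define the interface reconstructions U_{i+1/2,-} = U_i + (1/2)φ(θ_i)(U_{i+1} - U_i) and U_{i+1/2,+} = U_{i+1} - (1/2)φ(θ_{i+1})(U_{i+2} - U_{i+1}) with θ_j = (U_j - U_{j-1})/(U_{j+1} - U_j) (set θ_j = 0 if U_{j+1} = U_j), where φ is the Van Leer limiter, then U_{i+1/2,-} ≥ 0 and U_{i+1/2,+} ≥ 0. -/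
/-- Van Leer slope limiter. -/
noncomputable def vanLeer (θ : ℝ) : ℝ := (θ + |θ|) / (1 + |θ|)

/-- Slope ratio θ_j built from three consecutive values (U_{j-1}, U_j, U_{j+1}),
set to 0 if the denominator vanishes. -/
noncomputable def slopeRatio (a b c : ℝ) : ℝ := if c = b then 0 else (b - a) / (c - b)

/-!
Since `0 ≤ φ ≤ 2`, the left state `U_i + φ/2 (U_{i+1} - U_i)` is a convex combination of
`U_i` and `U_{i+1}`. For the right state only an increasing jump `U_{i+2} > U_{i+1}` can hurt;
then `φ(θ) ≤ 2 max θ 0` bounds the correction `φ/2 (U_{i+2} - U_{i+1})` by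
`max (U_{i+1} - U_i) 0 ≤ U_{i+1}`.
-/

lemma vanLeer_nonneg (θ : ℝ) : 0 ≤ vanLeer θ :=
  div_nonneg (by linarith [neg_abs_le θ]) (by positivity)

lemma vanLeer_le_two (θ : ℝ) : vanLeer θ ≤ 2 := by
  rw [vanLeer, div_le_iff₀ (by positivity)]
  linarith [le_abs_self θ]

lemma vanLeer_le_two_mul_max (θ : ℝ) : vanLeer θ ≤ 2 * max θ 0 := by
  rcases le_total θ 0 with hθ | hθ
  · simp [vanLeer, abs_of_nonpos hθ, hθ]
  · rw [vanLeer, abs_of_nonneg hθ, max_eq_left hθ, div_le_iff₀ (by positivity)]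
    nlinarith

lemma add_half_mul_sub_nonneg {a b φ : ℝ} (ha : 0 ≤ a) (hb : 0 ≤ b) (hφ₀ : 0 ≤ φ)
    (hφ₂ : φ ≤ 2) : 0 ≤ a + 1 / 2 * φ * (b - a) := by
  have hconvex : a + 1 / 2 * φ * (b - a) = (1 - φ / 2) * a + φ / 2 * b := by ring
  rw [hconvex]
  have : 0 ≤ 1 - φ / 2 := by linarith
  positivity

lemma half_vanLeer_slopeRatio_mul_le {a b : ℝ} (ha : 0 ≤ a) (hb : 0 ≤ b) (c : ℝ) :
    1 / 2 * vanLeer (slopeRatio a b c) * (c - b) ≤ b := by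
  rcases le_or_gt c b with hcb | hcb
  · nlinarith [vanLeer_nonneg (slopeRatio a b c)]
  · have hd : 0 < c - b := sub_pos.mpr hcb
    have hratio : slopeRatio a b c * (c - b) = b - a := by
      rw [slopeRatio, if_neg hcb.ne', div_mul_cancel₀ _ hd.ne']
    calc 1 / 2 * vanLeer (slopeRatio a b c) * (c - b)
        ≤ 1 / 2 * (2 * max (slopeRatio a b c) 0) * (c - b) := by
          gcongr; exact vanLeer_le_two_mul_max _
      _ = max (slopeRatio a b c * (c - b)) (0 * (c - b)) := by
          rw [← max_mul_of_nonneg _ _ hd.le]; ring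
      _ = max (b - a) 0 := by rw [hratio, zero_mul]
      _ ≤ b := max_le (by linarith) hb

theorem reconstruction_nonneg_general
    (Uim1 Ui Uip1 Uip2 : ℝ)
    (h2 : 0 ≤ Ui) (h3 : 0 ≤ Uip1) :
    0 ≤ Ui + (1 / 2) * vanLeer (slopeRatio Uim1 Ui Uip1) * (Uip1 - Ui) ∧
    0 ≤ Uip1 - (1 / 2) * vanLeer (slopeRatio Ui Uip1 Uip2) * (Uip2 - Uip1) :=
  ⟨add_half_mul_sub_nonneg h2 h3 (vanLeer_nonneg _) (vanLeer_le_two _),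
    sub_nonneg.mpr (half_vanLeer_slopeRatio_mul_le h2 h3 Uip2)⟩

theorem reconstruction_nonneg
    (Uim1 Ui Uip1 Uip2 : ℝ)
    (h1 : 0 ≤ Uim1) (h2 : 0 ≤ Ui) (h3 : 0 ≤ Uip1) (h4 : 0 ≤ Uip2) :
    0 ≤ Ui + (1 / 2) * vanLeer (slopeRatio Uim1 Ui Uip1) * (Uip1 - Ui) ∧
    0 ≤ Uip1 - (1 / 2) * vanLeer (slopeRatio Ui Uip1 Uip2) * (Uip2 - Uip1) :=
  reconstruction_nonneg_general Uim1 Ui Uip1 Uip2 h2 h3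
end

section
/- With the Van Leer limiter reconstruction, if U_i = 0 and all neighboring values U_{i-1}, U_{i+1}, U_{i+2} are nonnegative, then U_{i+1/2,-} = 0 and U_{i-1/2,+} = 0, so that the flux difference F(U_{i+1/2,-}, U_{i+1/2,+}) - F(U_{i-1/2,-}, U_{i-1/2,+}) = -A_{i+1/2}^- U_{i+1/2,+} - A_{i-1/2}^+ U_{i-1/2,-} ≤ 0, where F(a,b) = A^+ a - A^- b with A^+ = max(A,0), A^- = max(-A,0). -/
/-- Upwind flux F(a,b) = A⁺ a - A⁻ b. -/
noncomputable def upwindFlux (A a b : ℝ) : ℝ := max A 0 * a - max (-A) 0 * b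

lemma vanLeer_nonpos {θ : ℝ} (h : θ ≤ 0) : vanLeer θ = 0 := by
  unfold vanLeer
  rw [abs_of_nonpos h]
  simp

lemma vanLeer_le_two_mul {θ : ℝ} (h : 0 ≤ θ) : vanLeer θ ≤ 2 * θ := by
  unfold vanLeer
  rw [abs_of_nonneg h, div_le_iff₀ (by linarith)]
  nlinarith

theorem flux_difference_nonpos_at_zero
    (Uim2 Uim1 Ui Uip1 Uip2 : ℝ) (Aph Amh : ℝ)
    (hUi : Ui = 0) (h1 : 0 ≤ Uim1) (h3 : 0 ≤ Uip1) (h4 : 0 ≤ Uip2) :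
    -- reconstructions around the interfaces i+1/2 and i-1/2
    let θim1 := slopeRatio Uim2 Uim1 Ui
    let θi := slopeRatio Uim1 Ui Uip1
    let θip1 := slopeRatio Ui Uip1 Uip2
    let Uphm := Ui + (1 / 2) * vanLeer θi * (Uip1 - Ui)        -- U_{i+1/2,-}
    let Uphp := Uip1 - (1 / 2) * vanLeer θip1 * (Uip2 - Uip1)  -- U_{i+1/2,+}
    let Umhm := Uim1 + (1 / 2) * vanLeer θim1 * (Ui - Uim1)    -- U_{i-1/2,-}
    let Umhp := Ui - (1 / 2) * vanLeer θi * (Uip1 - Ui)        -- U_{i-1/2,+}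
    Uphm = 0 ∧ Umhp = 0 ∧
    upwindFlux Aph Uphm Uphp - upwindFlux Amh Umhm Umhp
      = -(max (-Aph) 0) * Uphp - max Amh 0 * Umhm ∧
    upwindFlux Aph Uphm Uphp - upwindFlux Amh Umhm Umhp ≤ 0 := by
  intro θim1 θi θip1 Uphm Uphp Umhm Umhp
  have hθi : θi ≤ 0 := by
    simp only [θi, slopeRatio, hUi]
    split
    · exact le_refl 0
    · rename_i h
      rw [sub_zero, zero_sub]
      exact div_nonpos_iff.mpr (Or.inr ⟨neg_nonpos.mpr h1, lt_of_le_of_ne h3 (Ne.symm h) |>.le⟩)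
  have hφi : vanLeer θi = 0 := vanLeer_nonpos hθi
  have hUphm : Uphm = 0 := by simp [Uphm, hφi, hUi]
  have hUmhp : Umhp = 0 := by simp [Umhp, hφi, hUi]
  have hUmhm : 0 ≤ Umhm := by
    have h2 := vanLeer_le_two θim1
    have h0 := vanLeer_nonneg θim1
    simp only [Umhm, hUi]
    nlinarith
  have hUphp : 0 ≤ Uphp := by
    simp only [Uphp, θip1, slopeRatio, hUi, sub_zero]
    split
    · rename_i h; simp [vanLeer]; linarith
    · rename_i h
      rcases lt_or_gt_of_ne h with hlt | hgt
      · have hθ : Uip1 / (Uip2 - Uip1) ≤ 0 :=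
          div_nonpos_iff.mpr (Or.inl ⟨h3, by linarith⟩)
        rw [vanLeer_nonpos hθ]; linarith
      · have hd : 0 < Uip2 - Uip1 := by linarith
        have hθ : 0 ≤ Uip1 / (Uip2 - Uip1) := div_nonneg h3 hd.le
        have := vanLeer_le_two_mul hθ
        have h5 : (1/2) * vanLeer (Uip1 / (Uip2 - Uip1)) * (Uip2 - Uip1)
            ≤ (1/2) * (2 * (Uip1 / (Uip2 - Uip1))) * (Uip2 - Uip1) := by
          nlinarith
        have h6 : (1/2) * (2 * (Uip1 / (Uip2 - Uip1))) * (Uip2 - Uip1) = Uip1 := by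
          field_simp
        linarith
  have heq : upwindFlux Aph Uphm Uphp - upwindFlux Amh Umhm Umhp
      = -(max (-Aph) 0) * Uphp - max Amh 0 * Umhm := by
    rw [hUphm, hUmhp]; unfold upwindFlux; ring
  refine ⟨hUphm, hUmhp, heq, ?_⟩
  rw [heq]
  have := le_max_right (-Aph) 0
  have := le_max_right Amh 0
  nlinarith [mul_nonneg (le_max_right (-Aph) 0) hUphp,
    mul_nonneg (le_max_right Amh 0) hUmhm]
end

section
/- Consider the explicit first-order scheme U_i^{n+1} = U_i^n - (Δt/Δx_i)(F_{i+1/2}^n - F_{i-1/2}^n) with F_{i+1/2}^n = (A_{i+1/2}^n)^+ U_i^n - (A_{i+1/2}^n)^- U_{i+1}^n and A_{i+1/2}^n = -[V(x_{i+1}) - V(x_i) + h(U_{i+1}^n) - h(U_i^n)]/Δx_{i+1/2}. If U_i^n ≥ 0 for all i and the CFL condition Δt · max_i |V(x_{i+1}) - V(x_i) + h(U_{i+1}^n) - h(U_i^n)| ≤ (1/2) min_i Δx_i² holds (with Δx_{i+1/2} ≥ min_i Δx_i for all i), then U_i^{n+1} ≥ 0 for all i. -/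
/-- Nonnegativity of the explicit first-order scheme under the CFL condition. -/
theorem explicit_scheme_nonneg
    (N : ℕ) (Δt m : ℝ) (Δx Δxh : ℕ → ℝ)   -- cell sizes and interface distances
    (h : ℝ → ℝ) (V : ℕ → ℝ)               -- V i = V(x_i)
    (Un Unp1 : ℕ → ℝ) (F : ℕ → ℝ)         -- F j = flux F_{j-1/2}, j = 0,…,N+1
    (hΔt : 0 ≤ Δt) (hm : 0 < m)
    (hmin : ∀ i ≤ N, m ≤ Δx i)            -- m = min_i Δx_i
    (hΔxh : ∀ i < N, m ≤ Δxh i)           -- Δx_{i+1/2} ≥ min_i Δx_i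
    (hUn : ∀ i ≤ N, 0 ≤ Un i)
    -- zero-flux boundary conditions
    (hF0 : F 0 = 0) (hFN : F (N + 1) = 0)
    -- interior upwind fluxes with A_{i+1/2} = -[V(x_{i+1}) - V(x_i) + h(U_{i+1}) - h(U_i)]/Δx_{i+1/2}
    (hFint : ∀ i < N,
        F (i + 1) =
          max (-(V (i + 1) - V i + h (Un (i + 1)) - h (Un i)) / Δxh i) 0 * Un i
          - max (-(-(V (i + 1) - V i + h (Un (i + 1)) - h (Un i)) / Δxh i)) 0 * Un (i + 1))
    -- explicit Euler update
    (hupdate : ∀ i ≤ N, Unp1 i = Un i - Δt / Δx i * (F (i + 1) - F i))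
    -- CFL condition
    (hCFL : ∀ i < N, Δt * |V (i + 1) - V i + h (Un (i + 1)) - h (Un i)| ≤ (1 / 2) * m ^ 2) :
    ∀ i ≤ N, 0 ≤ Unp1 i := by
  set A : ℕ → ℝ := fun i => -(V (i + 1) - V i + h (Un (i + 1)) - h (Un i)) / Δxh i with hA
  -- bound on Δt * |A i|
  have hAbd : ∀ i < N, Δt * |A i| ≤ m / 2 := by
    intro i hi
    have hx : m ≤ Δxh i := hΔxh i hi
    have hxpos : 0 < Δxh i := lt_of_lt_of_le hm hx
    have habs : |A i| = |V (i + 1) - V i + h (Un (i + 1)) - h (Un i)| / Δxh i := by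
      rw [hA]; simp only; rw [abs_div, abs_neg, abs_of_pos hxpos]
    have h1 : |A i| ≤ |V (i + 1) - V i + h (Un (i + 1)) - h (Un i)| / m := by
      rw [habs]
      exact div_le_div_of_nonneg_left (abs_nonneg _) hm hx
    calc Δt * |A i| ≤ Δt * (|V (i + 1) - V i + h (Un (i + 1)) - h (Un i)| / m) :=
          mul_le_mul_of_nonneg_left h1 hΔt
      _ = (Δt * |V (i + 1) - V i + h (Un (i + 1)) - h (Un i)|) / m := by ring
      _ ≤ ((1 / 2) * m ^ 2) / m := div_le_div_of_nonneg_right (hCFL i hi) hm.le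
      _ = m / 2 := by field_simp
  have hApos : ∀ i < N, Δt * max (A i) 0 ≤ m / 2 := fun i hi =>
    le_trans (mul_le_mul_of_nonneg_left
      (max_le (le_abs_self _) (abs_nonneg _)) hΔt) (hAbd i hi)
  have hAneg : ∀ i < N, Δt * max (-(A i)) 0 ≤ m / 2 := fun i hi =>
    le_trans (mul_le_mul_of_nonneg_left
      (max_le (neg_le_abs _) (abs_nonneg _)) hΔt) (hAbd i hi)
  -- L1 : Δt * F (i+1) ≤ (m/2) * Un i
  have hL1 : ∀ i ≤ N, Δt * F (i + 1) ≤ (m / 2) * Un i := by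
    intro i hi
    rcases lt_or_eq_of_le hi with hlt | heq
    · have hfi := hFint i hlt
      have hUi := hUn i hi
      have hUi1 := hUn (i + 1) hlt
      have key : Δt * F (i + 1) ≤ Δt * max (A i) 0 * Un i := by
        rw [hfi]
        have h1 : Δt * max (-(A i)) 0 * Un (i + 1) ≥ 0 := by positivity
        nlinarith [mul_nonneg (mul_nonneg hΔt (le_max_right (A i) 0)) hUi]
      calc Δt * F (i + 1) ≤ Δt * max (A i) 0 * Un i := key
        _ ≤ (m / 2) * Un i := mul_le_mul_of_nonneg_right (hApos i hlt) hUi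
    · subst heq
      rw [hFN]
      have := hUn i le_rfl
      nlinarith
  -- L2 : -(Δt * F i) ≤ (m/2) * Un i
  have hL2 : ∀ i ≤ N, -(Δt * F i) ≤ (m / 2) * Un i := by
    intro i hi
    cases i with
    | zero =>
      rw [hF0]
      have := hUn 0 hi
      nlinarith
    | succ j =>
      have hj : j < N := Nat.lt_of_succ_le hi
      have hfj := hFint j hj
      have hUj := hUn j (le_of_lt hj)
      have hUj1 := hUn (j + 1) hi
      have key : -(Δt * F (j + 1)) ≤ Δt * max (-(A j)) 0 * Un (j + 1) := by
        rw [hfj]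
        nlinarith [mul_nonneg (mul_nonneg hΔt (le_max_right (A j) 0)) hUj,
          mul_nonneg (mul_nonneg hΔt (le_max_right (-(A j)) 0)) hUj1]
      calc -(Δt * F (j + 1)) ≤ Δt * max (-(A j)) 0 * Un (j + 1) := key
        _ ≤ (m / 2) * Un (j + 1) := mul_le_mul_of_nonneg_right (hAneg j hj) hUj1
  -- conclude
  intro i hi
  rw [hupdate i hi]
  have hxi : 0 < Δx i := lt_of_lt_of_le hm (hmin i hi)
  have hUi := hUn i hi
  have hnum : Δt * (F (i + 1) - F i) ≤ Δx i * Un i := by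
    have h1 := hL1 i hi
    have h2 := hL2 i hi
    have hmx : m * Un i ≤ Δx i * Un i := mul_le_mul_of_nonneg_right (hmin i hi) hUi
    nlinarith
  have : Δt / Δx i * (F (i + 1) - F i) ≤ Un i := by
    rw [div_mul_eq_mul_div, mul_comm Δt, ← mul_comm Δt (F (i+1) - F i)]
    rw [div_le_iff₀ hxi]
    nlinarith
  linarith
end
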